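/- arXiv:2410.13849 — 5 statements merged into one kernel-verified Lean document; each statement's English description precedes it below -/
import Mathlib

section
/- Unified high-probability bound for NSGD: let δ ∈ (0,1), let (g_t)_{t≥1} be any sequence of random vectors in ℝ^d, and run NSGD x_{t+1} = x_t − η_t·g_t/‖g_t‖ (with g_t/‖g_t‖ = 0 if g_t = 0) with deterministic step-sizes η_t > 0. Let F_{t−1} = σ(g_1, …, g_{t−1}), assume σ_t := E[‖g_t − ∇F(x_t)‖ | F_{t−1}] < ∞ almost surely for all t ≤ T, and set η_max = max_{1≤t≤T} η_t, C_T = max_{1≤t≤T} η_t·∑_{τ=1}^{t−1} η_τ, and w_t = η_t / ∑_{τ=1}^T η_τ. Then with probability at least 1 − δ: ∑_{t=1}^T w_t·‖∇F(x_t)‖ ≤ ( 2Δ₁ + L·∑_{t=1}^T η_t² + 4·∑_{t=1}^T η_t·σ_t ) / ∑_{τ=1}^T η_τ + 12·( η_max·‖∇F(x₁)‖ + C_T·L )·log(1/δ) / ∑_{τ=1}^T η_τ. -/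
/-!
The descent lemma and `⟪∇F(x), g / ‖g‖⟫ ≥ ‖∇F(x)‖ - min (2 ‖g - ∇F(x)‖) (2 ‖∇F(x)‖)` give, for each
NSGD step, `η_t ‖∇F(x_t)‖ ≤ F(x_t) - F(x_{t+1}) + L η_t² + X_t` with
`X_t = η_t min (2 ‖g_t - ∇F(x_t)‖) (2 ‖∇F(x_t)‖)`; telescoping bounds `∑ η_t ‖∇F(x_t)‖` by
`Δ₁ + L ∑ η_t² + ∑ X_t`. The deviations `X_t` are nonnegative, adapted, have conditional mean at
most `2 η_t σ_t`, and, since `‖∇F(x_t)‖ ≤ ‖∇F(x₁)‖ + L ∑_{τ<t} η_τ`, are bounded by `c / 2` with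
`c = 4 (η_max ‖∇F(x₁)‖ + C_T L)`. As `e^y ≤ 1 + 2y ≤ e^{2y}` on `[0, 1/2]`, the process
`exp (∑_{τ ≤ t} (X_τ - 2 E[X_τ | 𝓕_{τ-1}]) / c)` is a supermartingale, and Chernoff's bound yields
`∑ X_t ≤ 4 ∑ η_t σ_t + c log (1/δ)` with probability at least `1 - δ`.
-/

open MeasureTheory ProbabilityTheory Real Finset InnerProductSpace

section Deterministic

variable {E : Type*} [NormedAddCommGroup E] [InnerProductSpace ℝ E]

theorem le_add_inner_add_mul_norm_sq_of_lipschitz_gradient [CompleteSpace E]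
    {F : E → ℝ} {gradF : E → E} {L : ℝ} (hL : 0 ≤ L)
    (hgrad : ∀ x, HasGradientAt F (gradF x) x)
    (hsmooth : ∀ x y, ‖gradF x - gradF y‖ ≤ L * ‖x - y‖) (x y : E) :
    F y ≤ F x + ⟪gradF x, y - x⟫_ℝ + L * ‖y - x‖ ^ 2 := by
  let φ : E → ℝ := fun u => F u - ⟪gradF x, u⟫_ℝ
  have hφ : ∀ u ∈ segment ℝ x y,
      HasFDerivWithinAt φ (toDual ℝ E (gradF u) - toDual ℝ E (gradF x)) (segment ℝ x y) u :=
    fun u _ => ((hgrad u).hasFDerivAt.sub (toDual ℝ E (gradF x)).hasFDerivAt).hasFDerivWithinAt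
  have hφ' : ∀ u ∈ segment ℝ x y,
      ‖toDual ℝ E (gradF u) - toDual ℝ E (gradF x)‖ ≤ L * ‖y - x‖ := by
    intro u hu
    have hux : ‖u - x‖ ≤ ‖y - x‖ := by
      rw [← dist_eq_norm, ← dist_eq_norm, dist_comm u, dist_comm y,
        ← dist_add_dist_of_mem_segment hu]
      exact le_add_of_nonneg_right dist_nonneg
    rw [← map_sub, LinearIsometryEquiv.norm_map]
    exact (hsmooth u x).trans (mul_le_mul_of_nonneg_left hux hL)
  have hmvt := (convex_segment x y).norm_image_sub_le_of_norm_hasFDerivWithin_le hφ hφ'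
    (left_mem_segment ℝ x y) (right_mem_segment ℝ x y)
  have hφyx : φ y - φ x ≤ L * ‖y - x‖ * ‖y - x‖ := (le_abs_self _).trans hmvt
  have hinner : ⟪gradF x, y⟫_ℝ - ⟪gradF x, x⟫_ℝ = ⟪gradF x, y - x⟫_ℝ := (inner_sub_right ..).symm
  simp only [φ] at hφyx
  linarith

theorem norm_inv_norm_smul_le_one (w : E) : ‖‖w‖⁻¹ • w‖ ≤ 1 := by
  rcases eq_or_ne w 0 with rfl | hw
  · simp
  · exact (norm_smul_inv_norm hw).le

theorem inner_inv_norm_smul_self (w : E) : ⟪w, ‖w‖⁻¹ • w⟫_ℝ = ‖w‖ := by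
  rw [real_inner_smul_right, real_inner_self_eq_norm_sq]
  rcases eq_or_ne ‖w‖ 0 with h | h
  · simp [h]
  · field_simp

theorem norm_sub_min_le_inner_inv_norm_smul (v w : E) :
    ‖v‖ - min (2 * ‖w - v‖) (2 * ‖v‖) ≤ ⟪v, ‖w‖⁻¹ • w⟫_ℝ := by
  have hu := norm_inv_norm_smul_le_one w
  have hvw : ⟪v - w, ‖w‖⁻¹ • w⟫_ℝ ≥ -‖w - v‖ := by
    have := (abs_real_inner_le_norm (v - w) (‖w‖⁻¹ • w)).trans
      (mul_le_of_le_one_right (norm_nonneg _) hu)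
    rw [norm_sub_rev] at this
    linarith [neg_abs_le ⟪v - w, ‖w‖⁻¹ • w⟫_ℝ]
  have hv : ⟪v, ‖w‖⁻¹ • w⟫_ℝ ≥ -‖v‖ := by
    have := (abs_real_inner_le_norm v (‖w‖⁻¹ • w)).trans
      (mul_le_of_le_one_right (norm_nonneg _) hu)
    linarith [neg_abs_le ⟪v, ‖w‖⁻¹ • w⟫_ℝ]
  have hsplit : ⟪v, ‖w‖⁻¹ • w⟫_ℝ = ⟪w, ‖w‖⁻¹ • w⟫_ℝ + ⟪v - w, ‖w‖⁻¹ • w⟫_ℝ := by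
    rw [← inner_add_left, add_sub_cancel]
  rw [inner_inv_norm_smul_self] at hsplit
  have := norm_sub_norm_le v w
  rw [norm_sub_rev v w] at this
  rcases min_cases (2 * ‖w - v‖) (2 * ‖v‖) with ⟨h, -⟩ | ⟨h, -⟩ <;> rw [h] <;> linarith

section NSGD

variable {η : ℕ → ℝ} {x g : ℕ → E}

theorem norm_sub_le_sum_of_nsgd (hη : ∀ t, 0 ≤ η t)
    (hrec : ∀ t, 1 ≤ t → x (t + 1) = x t - η t • (‖g t‖⁻¹ • g t)) {t : ℕ} (ht : 1 ≤ t) :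
    ‖x t - x 1‖ ≤ ∑ τ ∈ Icc 1 (t - 1), η τ := by
  induction t, ht using Nat.le_induction with
  | base => simp
  | succ n hn ih =>
    have hstep : ‖η n • (‖g n‖⁻¹ • g n)‖ ≤ η n := by
      rw [norm_smul, Real.norm_of_nonneg (hη n)]
      exact mul_le_of_le_one_right (hη n) (norm_inv_norm_smul_le_one _)
    rw [hrec n hn, sub_right_comm, Nat.add_sub_cancel, ← Nat.sub_add_cancel hn,
      sum_Icc_succ_top (by omega), Nat.sub_add_cancel hn]
    exact (norm_sub_le _ _).trans (add_le_add ih hstep)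

theorem norm_gradient_le_of_nsgd {gradF : E → E} {L : ℝ} (hL : 0 ≤ L)
    (hsmooth : ∀ x y, ‖gradF x - gradF y‖ ≤ L * ‖x - y‖) (hη : ∀ t, 0 ≤ η t)
    (hrec : ∀ t, 1 ≤ t → x (t + 1) = x t - η t • (‖g t‖⁻¹ • g t)) {t : ℕ} (ht : 1 ≤ t) :
    ‖gradF (x t)‖ ≤ ‖gradF (x 1)‖ + L * ∑ τ ∈ Icc 1 (t - 1), η τ := by
  have := norm_sub_norm_le (gradF (x t)) (gradF (x 1))
  have := (hsmooth (x t) (x 1)).trans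
    (mul_le_mul_of_nonneg_left (norm_sub_le_sum_of_nsgd hη hrec ht) hL)
  linarith

theorem sup'_mul_add_sup'_mul_nonneg {a L : ℝ} (ha : 0 ≤ a) (hL : 0 ≤ L) (hη : ∀ t, 0 ≤ η t)
    {T : ℕ} (hT : 1 ≤ T) :
    0 ≤ (Icc 1 T).sup' (nonempty_Icc.mpr hT) η * a
      + (Icc 1 T).sup' (nonempty_Icc.mpr hT) (fun t => η t * ∑ τ ∈ Icc 1 (t - 1), η τ) * L := by
  have hone : 1 ∈ Icc 1 T := left_mem_Icc.mpr hT
  have hηmax : 0 ≤ (Icc 1 T).sup' (nonempty_Icc.mpr hT) η := (hη 1).trans (le_sup' η hone)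
  have hC : 0 ≤ (Icc 1 T).sup' (nonempty_Icc.mpr hT)
      (fun t => η t * ∑ τ ∈ Icc 1 (t - 1), η τ) := le_sup'_of_le _ hone (by simp)
  positivity

theorem mul_norm_gradient_le_of_nsgd {gradF : E → E} {L : ℝ} (hL : 0 ≤ L)
    (hsmooth : ∀ x y, ‖gradF x - gradF y‖ ≤ L * ‖x - y‖) (hη : ∀ t, 0 ≤ η t)
    (hrec : ∀ t, 1 ≤ t → x (t + 1) = x t - η t • (‖g t‖⁻¹ • g t)) {T : ℕ} (hT : 1 ≤ T)
    {t : ℕ} (ht : t ∈ Icc 1 T) :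
    η t * ‖gradF (x t)‖ ≤ (Icc 1 T).sup' (nonempty_Icc.mpr hT) η * ‖gradF (x 1)‖
      + (Icc 1 T).sup' (nonempty_Icc.mpr hT) (fun t => η t * ∑ τ ∈ Icc 1 (t - 1), η τ) * L := by
  have hgrowth := mul_le_mul_of_nonneg_left
    (norm_gradient_le_of_nsgd hL hsmooth hη hrec (mem_Icc.mp ht).1) (hη t)
  have hηt := mul_le_mul_of_nonneg_right (le_sup' η ht) (norm_nonneg (gradF (x 1)))
  have hCt := mul_le_mul_of_nonneg_right
    (le_sup' (fun t => η t * ∑ τ ∈ Icc 1 (t - 1), η τ) ht) hL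
  linarith

variable [CompleteSpace E] {F : E → ℝ} {gradF : E → E} {L : ℝ}

theorem mul_norm_gradient_le_sub_normalized_step (hL : 0 ≤ L)
    (hgrad : ∀ x, HasGradientAt F (gradF x) x)
    (hsmooth : ∀ x y, ‖gradF x - gradF y‖ ≤ L * ‖x - y‖) {η : ℝ} (hη : 0 ≤ η) (x g : E) :
    η * ‖gradF x‖ ≤ F x - F (x - η • (‖g‖⁻¹ • g)) + L * η ^ 2
      + η * min (2 * ‖g - gradF x‖) (2 * ‖gradF x‖) := by
  have hdesc := le_add_inner_add_mul_norm_sq_of_lipschitz_gradient hL hgrad hsmooth x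
    (x - η • (‖g‖⁻¹ • g))
  rw [sub_sub_cancel_left, inner_neg_right, real_inner_smul_right, norm_neg, norm_smul,
    Real.norm_of_nonneg hη] at hdesc
  have hnorm : L * (η * ‖‖g‖⁻¹ • g‖) ^ 2 ≤ L * η ^ 2 := by
    gcongr
    exact mul_le_of_le_one_right hη (norm_inv_norm_smul_le_one g)
  have := mul_le_mul_of_nonneg_left (norm_sub_min_le_inner_inv_norm_smul (gradF x) g) hη
  nlinarith

theorem sum_mul_norm_gradient_le_of_nsgd (hL : 0 ≤ L)
    (hgrad : ∀ x, HasGradientAt F (gradF x) x)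
    (hsmooth : ∀ x y, ‖gradF x - gradF y‖ ≤ L * ‖x - y‖) (hη : ∀ t, 0 ≤ η t)
    (hrec : ∀ t, 1 ≤ t → x (t + 1) = x t - η t • (‖g t‖⁻¹ • g t)) (T : ℕ) :
    ∑ t ∈ Icc 1 T, η t * ‖gradF (x t)‖ ≤ F (x 1) - F (x (T + 1)) + L * ∑ t ∈ Icc 1 T, η t ^ 2
      + ∑ t ∈ Icc 1 T, η t * min (2 * ‖g t - gradF (x t)‖) (2 * ‖gradF (x t)‖) := by
  have htelescope : ∑ t ∈ Icc 1 T, (F (x t) - F (x (t + 1))) = F (x 1) - F (x (T + 1)) := by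
    rw [← Ico_add_one_right_eq_Icc, ← neg_sub, ← sum_Ico_sub (fun t => F (x t)) (by omega)]
    simp
  calc ∑ t ∈ Icc 1 T, η t * ‖gradF (x t)‖
      ≤ ∑ t ∈ Icc 1 T, (F (x t) - F (x (t + 1)) + L * η t ^ 2
          + η t * min (2 * ‖g t - gradF (x t)‖) (2 * ‖gradF (x t)‖)) := by
        refine sum_le_sum fun t ht => ?_
        rw [hrec t (mem_Icc.mp ht).1]
        exact mul_norm_gradient_le_sub_normalized_step hL hgrad hsmooth (hη t) _ _
    _ = _ := by rw [sum_add_distrib, sum_add_distrib, htelescope, mul_sum]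

end NSGD

end Deterministic

section Concentration

theorem exp_le_one_add_two_mul {y : ℝ} (h0 : 0 ≤ y) (h1 : y ≤ 1 / 2) : exp y ≤ 1 + 2 * y := by
  have hy : 0 < 1 - y := by linarith
  calc exp y ≤ 1 / (1 - y) := exp_bound_div_one_sub_of_interval h0 (by linarith)
    _ ≤ 1 + 2 * y := by rw [div_le_iff₀ hy]; nlinarith

variable {Ω : Type*} {m m0 : MeasurableSpace Ω} {μ : Measure Ω} {c : ℝ}

theorem condExp_exp_div_le [IsFiniteMeasure μ] {X : Ω → ℝ} (hm : m ≤ m0) (hc : 0 < c)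
    (hX : Measurable X) (hX0 : ∀ ω, 0 ≤ X ω) (hXc : ∀ ω, X ω ≤ c / 2) :
    μ[fun ω => exp (X ω / c) | m] ≤ᵐ[μ] fun ω => exp (2 * μ[X | m] ω / c) := by
  have hXint : Integrable X μ :=
    .of_bound hX.aestronglyMeasurable (c / 2) (.of_forall fun ω => by
      rw [Real.norm_of_nonneg (hX0 ω)]; exact hXc ω)
  have hexp : ∀ ω, exp (X ω / c) ≤ (fun _ => (1 : ℝ)) ω + ((2 / c) • X) ω := fun ω => by
    have := exp_le_one_add_two_mul (div_nonneg (hX0 ω) hc.le)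
      (by rw [div_le_iff₀ hc]; linarith [hXc ω])
    simp only [Pi.smul_apply, smul_eq_mul]
    linarith [show 2 / c * X ω = 2 * (X ω / c) by ring]
  have hexp_int : Integrable (fun ω => exp (X ω / c)) μ :=
    .of_bound (hX.div_const c).exp.aestronglyMeasurable (exp (1 / 2)) (.of_forall fun ω => by
      rw [Real.norm_of_nonneg (exp_pos _).le, exp_le_exp, div_le_iff₀ hc]; linarith [hXc ω])
  filter_upwards [condExp_mono (m := m) hexp_int ((integrable_const 1).add (hXint.smul (2 / c)))
      (.of_forall hexp), condExp_add (m := m) (integrable_const (1 : ℝ)) (hXint.smul (2 / c)),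
      condExp_smul (μ := μ) (2 / c) X m] with ω hmono hadd hsmul
  rw [hadd, Pi.add_apply, hsmul, condExp_const hm] at hmono
  simp only [Pi.smul_apply, smul_eq_mul] at hmono
  linarith [add_one_le_exp (2 * μ[X | m] ω / c),
    show 2 / c * μ[X | m] ω = 2 * μ[X | m] ω / c by ring]

theorem integral_mul_exp_sub_two_mul_condExp_div_le [IsFiniteMeasure μ] {A X : Ω → ℝ}
    (hm : m ≤ m0) (hc : 0 < c) (hA : StronglyMeasurable[m] A) (hA0 : ∀ ω, 0 ≤ A ω)
    (hAint : Integrable A μ) (hX : Measurable X) (hX0 : ∀ ω, 0 ≤ X ω) (hXc : ∀ ω, X ω ≤ c / 2) :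
    Integrable (fun ω => A ω * exp ((X ω - 2 * μ[X | m] ω) / c)) μ ∧
      ∫ ω, A ω * exp ((X ω - 2 * μ[X | m] ω) / c) ∂μ ≤ ∫ ω, A ω ∂μ := by
  set Y := μ[X | m]
  set B : Ω → ℝ := fun ω => exp (X ω / c)
  -- The integrand is `A' * B` with `A'` `m`-measurable: pull `A'` out of `μ[A' * B | m]`, then
  -- bound `μ[B | m]` by `exp (2 * Y / c)`, which cancels the second factor of `A'`.
  set A' : Ω → ℝ := fun ω => A ω * exp (-(2 * Y ω / c))
  have hY0 : 0 ≤ᵐ[μ] Y := condExp_nonneg (.of_forall hX0)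
  have hA' : StronglyMeasurable[m] A' := hA.mul
    ((stronglyMeasurable_condExp.measurable.const_mul 2).div_const c).neg.exp.stronglyMeasurable
  have hA'0 : ∀ ω, 0 ≤ A' ω := fun ω => mul_nonneg (hA0 ω) (exp_pos _).le
  have hA'A : ∀ᵐ ω ∂μ, A' ω ≤ A ω := by
    filter_upwards [hY0] with ω hω
    have : 0 ≤ 2 * Y ω / c := div_nonneg (mul_nonneg zero_le_two hω) hc.le
    exact mul_le_of_le_one_right (hA0 ω) (exp_le_one_iff.mpr (neg_nonpos.mpr this))
  have hB0 : ∀ ω, 0 ≤ B ω := fun ω => (exp_pos _).le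
  have hB : ∀ ω, B ω ≤ exp (1 / 2) := fun ω => by
    rw [exp_le_exp, div_le_iff₀ hc]; linarith [hXc ω]
  have hBmeas : Measurable B := (hX.div_const c).exp
  have hBint : Integrable B μ :=
    .of_bound hBmeas.aestronglyMeasurable (exp (1 / 2)) (.of_forall fun ω => by
      rw [Real.norm_of_nonneg (hB0 ω)]; exact hB ω)
  have hsplit : (fun ω => A ω * exp ((X ω - 2 * Y ω) / c)) = A' * B := by
    ext ω
    simp only [A', B, Pi.mul_apply, mul_assoc, ← exp_add]
    ring_nf
  have hA'B : Integrable (A' * B) μ := by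
    refine (hAint.const_mul (exp (1 / 2))).mono'
      ((hA'.mono hm).aestronglyMeasurable.mul hBmeas.aestronglyMeasurable) ?_
    filter_upwards [hA'A] with ω hω
    rw [Pi.mul_apply, Real.norm_of_nonneg (mul_nonneg (hA'0 ω) (hB0 ω)), mul_comm (exp _)]
    exact mul_le_mul hω (hB ω) (hB0 ω) (hA0 ω)
  have hcond := condExp_exp_div_le (μ := μ) hm hc hX hX0 hXc
  have hcancel : ∀ ω, A' ω * exp (2 * Y ω / c) = A ω := fun ω => by
    simp only [A', mul_assoc, ← exp_add, neg_add_cancel, exp_zero, mul_one]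
  have hA'condB : Integrable (A' * μ[B | m]) μ := by
    refine hAint.mono' ((hA'.mono hm).aestronglyMeasurable.mul
      (stronglyMeasurable_condExp.mono hm).aestronglyMeasurable) ?_
    filter_upwards [hcond, condExp_nonneg (m := m) (.of_forall hB0)] with ω h h0
    rw [Pi.mul_apply, Real.norm_of_nonneg (mul_nonneg (hA'0 ω) h0), ← hcancel ω]
    exact mul_le_mul_of_nonneg_left h (hA'0 ω)
  refine ⟨hsplit ▸ hA'B, ?_⟩
  calc ∫ ω, A ω * exp ((X ω - 2 * Y ω) / c) ∂μ = ∫ ω, (A' * B) ω ∂μ := by rw [hsplit]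
    _ = ∫ ω, μ[A' * B | m] ω ∂μ := (integral_condExp hm).symm
    _ = ∫ ω, (A' * μ[B | m]) ω ∂μ :=
      integral_congr_ae (condExp_mul_of_stronglyMeasurable_left hA' hA'B hBint)
    _ ≤ ∫ ω, A ω ∂μ := by
      refine integral_mono_ae hA'condB hAint ?_
      filter_upwards [hcond] with ω h
      rw [Pi.mul_apply, ← hcancel ω]
      exact mul_le_mul_of_nonneg_left h (hA'0 ω)

theorem condExp_le_const_mul_condExp [IsFiniteMeasure μ] {a : ℝ} {f h : Ω → ℝ}
    (hf : AEStronglyMeasurable f μ) (hf0 : ∀ ω, 0 ≤ f ω) (hh : Integrable h μ)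
    (hfh : ∀ ω, f ω ≤ a * h ω) :
    μ[f | m] ≤ᵐ[μ] fun ω => a * μ[h | m] ω := by
  have hf_int : Integrable f μ := (hh.const_mul a).mono' hf
    (.of_forall fun ω => (Real.norm_of_nonneg (hf0 ω)).trans_le (hfh ω))
  filter_upwards [condExp_mono (m := m) hf_int (hh.const_mul a) (.of_forall hfh),
    condExp_smul (μ := μ) a h m] with ω hmono hsmul
  exact hmono.trans_eq hsmul

theorem ofReal_one_sub_le_measure_of_ae_notMem [IsProbabilityMeasure μ] {s t : Set Ω} {δ : ℝ}
    (hδ : 0 ≤ δ) (hs : μ s ≤ ENNReal.ofReal δ) (hst : ∀ᵐ ω ∂μ, ω ∉ s → ω ∈ t) :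
    ENNReal.ofReal (1 - δ) ≤ μ t := by
  have hcover : 1 ≤ μ s + μ sᶜ := by
    rw [← measure_univ (μ := μ), ← Set.union_compl_self s]
    exact measure_union_le _ _
  calc ENNReal.ofReal (1 - δ) = 1 - ENNReal.ofReal δ := by
        rw [ENNReal.ofReal_sub _ hδ, ENNReal.ofReal_one]
    _ ≤ 1 - μ s := tsub_le_tsub_left hs 1
    _ ≤ μ sᶜ := tsub_le_iff_left.mpr hcover
    _ ≤ μ t := measure_mono_ae hst

variable [IsProbabilityMeasure μ] (𝓕 : Filtration ℕ m0) {X : ℕ → Ω → ℝ}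

theorem integral_exp_sum_sub_two_mul_condExp_div_le_one (hc : 0 < c) {N : ℕ}
    (hXmeas : ∀ t ∈ Icc 1 N, Measurable[𝓕 t] (X t)) (hX0 : ∀ t ∈ Icc 1 N, ∀ ω, 0 ≤ X t ω)
    (hXc : ∀ t ∈ Icc 1 N, ∀ ω, X t ω ≤ c / 2) :
    Integrable (fun ω => exp ((∑ t ∈ Icc 1 N, (X t ω - 2 * μ[X t | 𝓕 (t - 1)] ω)) / c)) μ ∧
      ∫ ω, exp ((∑ t ∈ Icc 1 N, (X t ω - 2 * μ[X t | 𝓕 (t - 1)] ω)) / c) ∂μ ≤ 1 := by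
  induction N with
  | zero => simp
  | succ n ih =>
    have hsub : Icc 1 n ⊆ Icc 1 (n + 1) := Icc_subset_Icc_right n.le_succ
    have hlast : n + 1 ∈ Icc 1 (n + 1) := right_mem_Icc.mpr (by omega)
    obtain ⟨hint, hle⟩ := ih (fun t ht => hXmeas t (hsub ht)) (fun t ht => hX0 t (hsub ht))
      (fun t ht => hXc t (hsub ht))
    have hmeas : Measurable[𝓕 n]
        (fun ω => exp ((∑ t ∈ Icc 1 n, (X t ω - 2 * μ[X t | 𝓕 (t - 1)] ω)) / c)) := by
      refine (Finset.measurable_sum _ fun t ht => ?_).div_const c |>.exp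
      have htn := (mem_Icc.mp ht).2
      exact ((hXmeas t (hsub ht)).mono (𝓕.mono htn) le_rfl).sub
        ((stronglyMeasurable_condExp.measurable.mono (𝓕.mono (by omega)) le_rfl).const_mul 2)
    have hstep := integral_mul_exp_sub_two_mul_condExp_div_le (μ := μ) (𝓕.le n) hc
      hmeas.stronglyMeasurable (fun ω => (exp_pos _).le) hint
      ((hXmeas _ hlast).mono (𝓕.le _) le_rfl) (hX0 _ hlast) (hXc _ hlast)
    simp only [← exp_add, ← add_div] at hstep
    simp only [sum_Icc_succ_top (by omega : 1 ≤ n + 1), Nat.add_sub_cancel]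
    exact ⟨hstep.1, hstep.2.trans hle⟩

theorem measure_mul_lt_sum_sub_two_mul_condExp_le (hc : 0 ≤ c) {N : ℕ}
    (hXmeas : ∀ t ∈ Icc 1 N, Measurable[𝓕 t] (X t)) (hX0 : ∀ t ∈ Icc 1 N, ∀ ω, 0 ≤ X t ω)
    (hXc : ∀ t ∈ Icc 1 N, ∀ ω, X t ω ≤ c / 2) (ε : ℝ) :
    μ {ω | c * ε < ∑ t ∈ Icc 1 N, (X t ω - 2 * μ[X t | 𝓕 (t - 1)] ω)} ≤
      ENNReal.ofReal (exp (-ε)) := by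
  rcases hc.eq_or_lt with rfl | hc
  · have hX : ∀ t ∈ Icc 1 N, X t = 0 := fun t ht => funext fun ω =>
      le_antisymm (by simpa using hXc t ht ω) (hX0 t ht ω)
    have hempty : {ω | 0 * ε < ∑ t ∈ Icc 1 N, (X t ω - 2 * μ[X t | 𝓕 (t - 1)] ω)} = ∅ := by
      ext ω
      simp +contextual [sum_eq_zero, hX]
    rw [hempty, measure_empty]
    exact zero_le
  obtain ⟨hint, hle⟩ := integral_exp_sum_sub_two_mul_condExp_div_le_one 𝓕 hc hXmeas hX0 hXc
    (μ := μ)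
  have hchernoff := measure_ge_le_exp_mul_mgf ε zero_le_one
    (X := fun ω => (∑ t ∈ Icc 1 N, (X t ω - 2 * μ[X t | 𝓕 (t - 1)] ω)) / c)
    (by simpa only [one_mul] using hint)
  simp only [mgf, one_mul, neg_mul] at hchernoff
  calc μ {ω | c * ε < ∑ t ∈ Icc 1 N, (X t ω - 2 * μ[X t | 𝓕 (t - 1)] ω)}
      ≤ μ {ω | ε ≤ (∑ t ∈ Icc 1 N, (X t ω - 2 * μ[X t | 𝓕 (t - 1)] ω)) / c} :=
        measure_mono fun ω hω => by
          rw [Set.mem_ofPred_eq, le_div_iff₀ hc, mul_comm]; exact hω.le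
    _ = ENNReal.ofReal (μ.real _) := (ofReal_measureReal).symm
    _ ≤ ENNReal.ofReal (exp (-ε)) :=
        ENNReal.ofReal_le_ofReal (hchernoff.trans (mul_le_of_le_one_right (exp_pos _).le hle))

end Concentration

section Filtration

variable {Ω β : Type*} {m0 : MeasurableSpace Ω} [mβ : MeasurableSpace β]

def MeasureTheory.Filtration.naturalFromOne (g : ℕ → Ω → β) (hg : ∀ t, Measurable (g t)) :
    Filtration ℕ m0 where
  seq t := ⨆ s ∈ Icc 1 t, MeasurableSpace.comap (g s) mβ
  mono' _ _ hab := biSup_mono fun _ hs => Icc_subset_Icc_right hab hs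
  le' _ := iSup₂_le fun s _ => (hg s).comap_le

theorem MeasureTheory.Filtration.measurable_naturalFromOne {g : ℕ → Ω → β}
    (hg : ∀ t, Measurable (g t)) {t : ℕ} (ht : 1 ≤ t) :
    Measurable[Filtration.naturalFromOne g hg t] (g t) :=
  Measurable.of_comap_le <| le_biSup (fun s => MeasurableSpace.comap (g s) mβ)
    (right_mem_Icc.mpr ht)

end Filtration

section StochasticNSGD

variable {Ω E : Type*} {m m0 : MeasurableSpace Ω} {μ : Measure Ω}
  [NormedAddCommGroup E] [InnerProductSpace ℝ E] [MeasurableSpace E] [BorelSpace E]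
  [SecondCountableTopology E] {𝓕 : Filtration ℕ m0} {η : ℕ → ℝ} {x g : ℕ → Ω → E}

theorem measurable_nsgd_iterate (x₁ : E) (hx1 : ∀ ω, x 1 ω = x₁)
    (hg : ∀ t, 1 ≤ t → Measurable[𝓕 t] (g t))
    (hrec : ∀ t ω, 1 ≤ t → x (t + 1) ω = x t ω - η t • (‖g t ω‖⁻¹ • g t ω)) {t : ℕ}
    (ht : 1 ≤ t) : Measurable[𝓕 (t - 1)] (x t) := by
  induction t, ht using Nat.le_induction with
  | base => simp only [funext hx1, measurable_const]
  | succ n hn ih =>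
    have hxn : Measurable[𝓕 n] (x n) := ih.mono (𝓕.mono (n.sub_le 1)) le_rfl
    have hgn := hg n hn
    rw [funext (hrec n · hn), Nat.add_sub_cancel]
    fun_prop

theorem measurable_nsgd_deviation {gradF : E → E} (hgradF : Measurable gradF) (x₁ : E)
    (hx1 : ∀ ω, x 1 ω = x₁) (hg : ∀ t, 1 ≤ t → Measurable[𝓕 t] (g t))
    (hrec : ∀ t ω, 1 ≤ t → x (t + 1) ω = x t ω - η t • (‖g t ω‖⁻¹ • g t ω)) {t : ℕ}
    (ht : 1 ≤ t) :
    Measurable[𝓕 t] fun ω => η t * min (2 * ‖g t ω - gradF (x t ω)‖) (2 * ‖gradF (x t ω)‖) := by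
  have hxt := (measurable_nsgd_iterate x₁ hx1 hg hrec ht).mono (𝓕.mono (t.sub_le 1)) le_rfl
  have hgt := hg t ht
  fun_prop

theorem ae_condExp_nsgd_deviation_le [IsFiniteMeasure μ] {gradF : E → E}
    (hgradF : Measurable gradF) (hη : ∀ t, 0 ≤ η t) (x₁ : E) (hx1 : ∀ ω, x 1 ω = x₁)
    (hg : ∀ t, 1 ≤ t → Measurable[𝓕 t] (g t))
    (hrec : ∀ t ω, 1 ≤ t → x (t + 1) ω = x t ω - η t • (‖g t ω‖⁻¹ • g t ω)) (T : ℕ)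
    (hint : ∀ t ∈ Icc 1 T, Integrable (fun ω => ‖g t ω - gradF (x t ω)‖) μ) :
    ∀ᵐ ω ∂μ, ∀ t ∈ Icc 1 T,
      μ[fun ω => η t * min (2 * ‖g t ω - gradF (x t ω)‖) (2 * ‖gradF (x t ω)‖) | 𝓕 (t - 1)] ω
        ≤ 2 * η t * μ[fun ω => ‖g t ω - gradF (x t ω)‖ | 𝓕 (t - 1)] ω := by
  refine (Filter.eventually_all_finset _).mpr fun t ht => condExp_le_const_mul_condExp
    (((measurable_nsgd_deviation hgradF x₁ hx1 hg hrec (mem_Icc.mp ht).1).mono (𝓕.le t)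
      le_rfl).aestronglyMeasurable) (fun ω => mul_nonneg (hη t) (by positivity)) (hint t ht)
    fun ω => ?_
  rw [mul_assoc, mul_left_comm]
  exact mul_le_mul_of_nonneg_left (min_le_left _ _) (hη t)

theorem measure_nsgd_deviation_gt_le [IsProbabilityMeasure μ] {gradF : E → E} {L : ℝ}
    (hL : 0 ≤ L) (hsmooth : ∀ x y, ‖gradF x - gradF y‖ ≤ L * ‖x - y‖)
    (hgradF : Measurable gradF) (hη : ∀ t, 0 ≤ η t) (x₁ : E) (hx1 : ∀ ω, x 1 ω = x₁)
    (hg : ∀ t, 1 ≤ t → Measurable[𝓕 t] (g t))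
    (hrec : ∀ t ω, 1 ≤ t → x (t + 1) ω = x t ω - η t • (‖g t ω‖⁻¹ • g t ω)) {T : ℕ}
    (hT : 1 ≤ T) (ε : ℝ) :
    μ {ω | 4 * ((Icc 1 T).sup' (nonempty_Icc.mpr hT) η * ‖gradF x₁‖
          + (Icc 1 T).sup' (nonempty_Icc.mpr hT) (fun t => η t * ∑ τ ∈ Icc 1 (t - 1), η τ) * L)
          * ε < ∑ t ∈ Icc 1 T,
        (η t * min (2 * ‖g t ω - gradF (x t ω)‖) (2 * ‖gradF (x t ω)‖) - 2 * μ[fun ω =>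
          η t * min (2 * ‖g t ω - gradF (x t ω)‖) (2 * ‖gradF (x t ω)‖) | 𝓕 (t - 1)] ω)} ≤
      ENNReal.ofReal (exp (-ε)) := by
  refine measure_mul_lt_sum_sub_two_mul_condExp_le 𝓕
    (mul_nonneg zero_le_four (sup'_mul_add_sup'_mul_nonneg (norm_nonneg _) hL hη hT))
    (fun t ht => measurable_nsgd_deviation hgradF x₁ hx1 hg hrec (mem_Icc.mp ht).1)
    (fun t _ ω => mul_nonneg (hη t) (by positivity)) (fun t ht ω => ?_) ε
  have := mul_norm_gradient_le_of_nsgd (x := (x · ω)) (g := (g · ω)) hL hsmooth hη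
    (fun s hs => hrec s ω hs) hT ht
  rw [hx1 ω] at this
  have := mul_le_mul_of_nonneg_left (min_le_right (2 * ‖g t ω - gradF (x t ω)‖)
    (2 * ‖gradF (x t ω)‖)) (hη t)
  linarith

end StochasticNSGD

/-- Theorem 3: unified high-probability bound for NSGD with an arbitrary
gradient estimator sequence `(g_t)`: with probability at least `1 − δ`, the weighted average
gradient norm is bounded by the in-expectation quantity plus a `log(1/δ)` deviation term. -/
theorem nsgd_unified_high_probability
    {d : ℕ} {Ω : Type*} [MeasurableSpace Ω] (μ : Measure Ω) [IsProbabilityMeasure μ]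
    (F : EuclideanSpace ℝ (Fin d) → ℝ)
    (gradF : EuclideanSpace ℝ (Fin d) → EuclideanSpace ℝ (Fin d))
    (L Fstar Δ₁ δ : ℝ) (hL : 0 ≤ L) (hδ0 : 0 < δ) (hδ1 : δ < 1)
    -- F is differentiable with gradient `gradF` and is L-smooth
    (hgrad : ∀ x, HasGradientAt F (gradF x) x)
    (hsmooth : ∀ x y, ‖gradF x - gradF y‖ ≤ L * ‖x - y‖)
    -- F is bounded below by Fstar
    (hlb : ∀ x, Fstar ≤ F x)
    -- horizon and deterministic positive step-sizes
    (T : ℕ) (hT : 1 ≤ T)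
    (η : ℕ → ℝ) (hη : ∀ t, 0 < η t)
    -- the gradient estimators and the NSGD iterates
    (g : ℕ → Ω → EuclideanSpace ℝ (Fin d))
    (hgmeas : ∀ t, Measurable (g t))
    (x : ℕ → Ω → EuclideanSpace ℝ (Fin d))
    (x₁ : EuclideanSpace ℝ (Fin d)) (hx1 : ∀ ω, x 1 ω = x₁)
    (hΔ : F x₁ - Fstar ≤ Δ₁)
    (hrec : ∀ t ω, 1 ≤ t → x (t + 1) ω = x t ω - η t • (‖g t ω‖⁻¹ • g t ω))
    -- the natural filtration of the estimators: 𝓕 t = σ(g_1, …, g_t)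
    (𝓕 : ℕ → MeasurableSpace Ω)
    (h𝓕 : ∀ t, 𝓕 t = ⨆ s ∈ Finset.Icc 1 t, MeasurableSpace.comap (g s) inferInstance)
    -- the conditional expected deviations σ_t = E[‖g_t − ∇F(x_t)‖ | 𝓕_{t−1}] are finite
    (hint : ∀ t ∈ Finset.Icc 1 T, Integrable (fun ω => ‖g t ω - gradF (x t ω)‖) μ)
    (σt : ℕ → Ω → ℝ)
    (hσt : ∀ t, σt t = μ[fun ω => ‖g t ω - gradF (x t ω)‖ | 𝓕 (t - 1)]) :
    ENNReal.ofReal (1 - δ) ≤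
      μ {ω | ∑ t ∈ Finset.Icc 1 T,
              (η t / ∑ τ ∈ Finset.Icc 1 T, η τ) * ‖gradF (x t ω)‖ ≤
            (2 * Δ₁ + L * ∑ t ∈ Finset.Icc 1 T, (η t) ^ 2
                + 4 * ∑ t ∈ Finset.Icc 1 T, η t * σt t ω) /
              (∑ τ ∈ Finset.Icc 1 T, η τ)
            + 12 * (((Finset.Icc 1 T).sup' (Finset.nonempty_Icc.mpr hT) η) * ‖gradF x₁‖
                  + ((Finset.Icc 1 T).sup' (Finset.nonempty_Icc.mpr hT)
                      (fun t => η t * ∑ τ ∈ Finset.Icc 1 (t - 1), η τ)) * L)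
                * Real.log (1 / δ) / (∑ τ ∈ Finset.Icc 1 T, η τ)} := by
  obtain rfl : 𝓕 = Filtration.naturalFromOne g hgmeas := funext h𝓕
  have hη0 : ∀ t, 0 ≤ η t := fun t => (hη t).le
  have hg : ∀ t, 1 ≤ t → Measurable[Filtration.naturalFromOne g hgmeas t] (g t) :=
    fun t ht => Filtration.measurable_naturalFromOne hgmeas ht
  have hgradF : Measurable gradF :=
    (LipschitzWith.of_dist_le' (by simpa only [dist_eq_norm] using hsmooth)).continuous.measurable
  have hbad := measure_nsgd_deviation_gt_le (μ := μ) hL hsmooth hgradF hη0 x₁ hx1 hg hrec hT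
    (log (1 / δ))
  rw [show exp (-log (1 / δ)) = δ by rw [one_div, log_inv, neg_neg, exp_log hδ0]] at hbad
  refine ofReal_one_sub_le_measure_of_ae_notMem hδ0.le hbad ?_
  filter_upwards [ae_condExp_nsgd_deviation_le hgradF hη0 x₁ hx1 hg hrec T hint]
    with ω hcond hgood
  simp only [← hσt, not_lt] at hcond hgood ⊢
  have hpath := sum_mul_norm_gradient_le_of_nsgd (x := (x · ω)) (g := (g · ω)) hL hgrad hsmooth
    hη0 (fun s hs => hrec s ω hs) T
  rw [hx1 ω] at hpath
  have hS : 0 < ∑ τ ∈ Icc 1 T, η τ := sum_pos (fun t _ => hη t) ⟨1, left_mem_Icc.mpr hT⟩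
  have hK := sup'_mul_add_sup'_mul_nonneg (norm_nonneg (gradF x₁)) hL hη0 hT
  have hlog : 0 ≤ log (1 / δ) := log_nonneg (one_le_one_div hδ0 hδ1.le)
  have hmean := sum_le_sum hcond
  simp only [mul_assoc, ← mul_sum] at hmean
  rw [sum_sub_distrib, ← mul_sum] at hgood
  simp_rw [div_mul_eq_mul_div, ← sum_div, ← add_div]
  rw [div_le_div_iff_of_pos_right hS]
  linarith [hlb (x (T + 1) ω), hlb x₁, mul_nonneg hK hlog]
end

section
/- Deterministic lower bound for normalized gradient descent with polynomial step-size: fix r ∈ (0,1) and η > 0. There exists a constant c > 0 (depending only on r and η) such that for all L, Δ₁ > 0 and all sufficiently small ε > 0, there exist an L-smooth function F : ℝ → ℝ bounded below and an initial point x₁ with F(x₁) − inf F ≤ Δ₁, such that for every horizon T ≤ c·( (Δ₁/ε)^{1/(1−r)} + (L/ε)^{1/r} ), normalized gradient descent x_{t+1} = x_t − η·T^{-r}·F'(x_t)/|F'(x_t)| run for T iterations from x₁ produces iterates with |F'(x_t)| > ε for all 1 ≤ t ≤ T. -/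
/-!
The hard instance is the pseudo-Huber function `F x = 2ε √(a² + x²)` with `a = 2ε/L`: it is
`L`-smooth, minimal at `0`, and `|F'| > ε` outside `(-a, a)`. Normalized gradient descent moves
by exactly `δ = η T^{-r}` per step, so it sees an `ε`-small gradient only by landing in `(-a, a)`.
If the term `(Δ₁/ε)^{1/(1-r)}` dominates, start at `-Δ₁/(2ε)`: in `T` steps the iterates travel
`T δ = η T^{1-r} ≤ Δ₁/(4ε)`, not enough to reach `-a`. Otherwise start at `-a`: now
`δ ≥ 4ε/L = 2a`, so the iterates alternate between `-a` and `-a + δ ≥ a`, jumping over the valley.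
-/
open Real

namespace NGDLowerBound

noncomputable def pseudoHuber (a x : ℝ) : ℝ := √(a ^ 2 + x ^ 2)

noncomputable def pseudoHuberDeriv (a x : ℝ) : ℝ := x / √(a ^ 2 + x ^ 2)

section PseudoHuber

variable {a : ℝ}

lemma hasDerivAt_pseudoHuber (ha : a ≠ 0) (x : ℝ) :
    HasDerivAt (pseudoHuber a) (pseudoHuberDeriv a x) x := by
  refine (((hasDerivAt_pow 2 x).const_add (a ^ 2)).sqrt (by positivity)).congr_deriv ?_
  simp only [pseudoHuberDeriv]
  field_simp
  norm_num

lemma hasDerivAt_pseudoHuberDeriv (ha : a ≠ 0) (x : ℝ) :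
    HasDerivAt (pseudoHuberDeriv a) (a ^ 2 / √(a ^ 2 + x ^ 2) ^ 3) x := by
  have hs : 0 < √(a ^ 2 + x ^ 2) := by positivity
  have hsq : √(a ^ 2 + x ^ 2) ^ 2 = a ^ 2 + x ^ 2 := sq_sqrt (by positivity)
  refine ((hasDerivAt_id' x).div (hasDerivAt_pseudoHuber ha x) hs.ne').congr_deriv ?_
  simp only [pseudoHuber, pseudoHuberDeriv]
  field_simp
  linear_combination hsq

lemma le_pseudoHuber (x : ℝ) : a ≤ pseudoHuber a x :=
  le_sqrt_of_sq_le (by nlinarith [sq_nonneg x])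

lemma pseudoHuber_le_add_abs (ha : 0 ≤ a) (x : ℝ) : pseudoHuber a x ≤ a + |x| :=
  sqrt_le_iff.mpr ⟨by positivity, by nlinarith [sq_abs x, abs_nonneg x]⟩

lemma pseudoHuber_zero (ha : 0 ≤ a) : pseudoHuber a 0 = a := by
  simp [pseudoHuber, sqrt_sq ha]

lemma abs_pseudoHuberDeriv_sub_le (ha : 0 < a) (x y : ℝ) :
    |pseudoHuberDeriv a x - pseudoHuberDeriv a y| ≤ a⁻¹ * |x - y| := by
  have hbound (z : ℝ) : ‖a ^ 2 / √(a ^ 2 + z ^ 2) ^ 3‖ ≤ a⁻¹ := by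
    have hcube : a ^ 3 ≤ √(a ^ 2 + z ^ 2) ^ 3 := by
      gcongr; exact le_pseudoHuber z
    rw [norm_of_nonneg (by positivity), div_le_iff₀ (by positivity)]
    calc a ^ 2 = a⁻¹ * a ^ 3 := by field_simp
      _ ≤ a⁻¹ * √(a ^ 2 + z ^ 2) ^ 3 := by gcongr
  simpa [Real.norm_eq_abs] using Convex.norm_image_sub_le_of_norm_hasDerivWithin_le
    (fun z _ => (hasDerivAt_pseudoHuberDeriv ha.ne' z).hasDerivWithinAt)
    (fun z _ => hbound z) convex_univ (Set.mem_univ y) (Set.mem_univ x)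

lemma half_lt_pseudoHuberDeriv (ha : 0 < a) {x : ℝ} (hx : a ≤ x) :
    1 / 2 < pseudoHuberDeriv a x := by
  have hx0 : 0 < x := ha.trans_le hx
  have hs : √(a ^ 2 + x ^ 2) < 2 * x :=
    (sqrt_lt' (by positivity)).mpr (by nlinarith)
  rw [pseudoHuberDeriv, lt_div_iff₀ (by positivity)]
  linarith

lemma pseudoHuberDeriv_neg (x : ℝ) : pseudoHuberDeriv a (-x) = -pseudoHuberDeriv a x := by
  simp [pseudoHuberDeriv, neg_div]

lemma pseudoHuberDeriv_lt_neg_half (ha : 0 < a) {x : ℝ} (hx : x ≤ -a) :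
    pseudoHuberDeriv a x < -(1 / 2) := by
  have := half_lt_pseudoHuberDeriv ha (le_neg_of_le_neg hx)
  rw [pseudoHuberDeriv_neg] at this
  linarith

end PseudoHuber

noncomputable def hardFunction (ε L x : ℝ) : ℝ := 2 * ε * pseudoHuber (2 * ε / L) x

noncomputable def hardDeriv (ε L x : ℝ) : ℝ := 2 * ε * pseudoHuberDeriv (2 * ε / L) x

section HardInstance

variable {ε L : ℝ}

lemma hasDerivAt_hardFunction (hε : 0 < ε) (hL : 0 < L) (x : ℝ) :
    HasDerivAt (hardFunction ε L) (hardDeriv ε L x) x :=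
  (hasDerivAt_pseudoHuber (by positivity) x).const_mul (2 * ε)

lemma abs_hardDeriv_sub_le (hε : 0 < ε) (hL : 0 < L) (x y : ℝ) :
    |hardDeriv ε L x - hardDeriv ε L y| ≤ L * |x - y| := by
  have h := abs_pseudoHuberDeriv_sub_le (a := 2 * ε / L) (by positivity) x y
  calc |hardDeriv ε L x - hardDeriv ε L y|
      = 2 * ε * |pseudoHuberDeriv (2 * ε / L) x - pseudoHuberDeriv (2 * ε / L) y| := by
        rw [hardDeriv, hardDeriv, ← mul_sub, abs_mul, abs_of_pos (by positivity)]
    _ ≤ 2 * ε * ((2 * ε / L)⁻¹ * |x - y|) := by gcongr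
    _ = L * |x - y| := by field_simp

lemma isLeast_range_hardFunction (hε : 0 < ε) (hL : 0 < L) :
    IsLeast (Set.range (hardFunction ε L)) (2 * ε * (2 * ε / L)) := by
  refine ⟨⟨0, by rw [hardFunction, pseudoHuber_zero (by positivity)]⟩, ?_⟩
  rintro _ ⟨x, rfl⟩
  exact mul_le_mul_of_nonneg_left (le_pseudoHuber x) (by positivity)

lemma hardFunction_neg_sub_sInf_le (hε : 0 < ε) (hL : 0 < L) {d : ℝ} (hd : 0 ≤ d) :
    hardFunction ε L (-d) - sInf (Set.range (hardFunction ε L)) ≤ 2 * ε * d := by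
  have h := pseudoHuber_le_add_abs (a := 2 * ε / L) (by positivity) (-d)
  rw [abs_neg, abs_of_nonneg hd] at h
  rw [(isLeast_range_hardFunction hε hL).csInf_eq, hardFunction]
  nlinarith

lemma hardDeriv_lt_neg (hε : 0 < ε) (hL : 0 < L) {x : ℝ} (hx : x ≤ -(2 * ε / L)) :
    hardDeriv ε L x < -ε := by
  have := pseudoHuberDeriv_lt_neg_half (by positivity) hx
  rw [hardDeriv]
  nlinarith

lemma lt_hardDeriv (hε : 0 < ε) (hL : 0 < L) {x : ℝ} (hx : 2 * ε / L ≤ x) :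
    ε < hardDeriv ε L x := by
  have := half_lt_pseudoHuberDeriv (by positivity) hx
  rw [hardDeriv]
  nlinarith

end HardInstance

def IsNormalizedGDOrbit (F' : ℝ → ℝ) (δ : ℝ) (x : ℕ → ℝ) : Prop :=
  ∀ t, 1 ≤ t → x (t + 1) = x t - δ * (F' (x t) / |F' (x t)|)

namespace IsNormalizedGDOrbit

variable {F' : ℝ → ℝ} {δ : ℝ} {x : ℕ → ℝ}

lemma succ_of_neg (hx : IsNormalizedGDOrbit F' δ x) {t : ℕ} (ht : 1 ≤ t) (h : F' (x t) < 0) :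
    x (t + 1) = x t + δ := by
  rw [hx t ht, abs_of_neg h, div_neg, div_self h.ne]
  ring

lemma succ_of_pos (hx : IsNormalizedGDOrbit F' δ x) {t : ℕ} (ht : 1 ≤ t) (h : 0 < F' (x t)) :
    x (t + 1) = x t - δ := by
  rw [hx t ht, abs_of_pos h, div_self h.ne']
  ring

lemma eq_add_mul_of_neg (hx : IsNormalizedGDOrbit F' δ x) {T : ℕ}
    (hneg : ∀ n < T, F' (x 1 + n * δ) < 0) (n : ℕ) (hn : n ≤ T) :
    x (n + 1) = x 1 + n * δ := by
  induction n with
  | zero => simp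
  | succ n ih =>
    have h := ih (by omega)
    rw [hx.succ_of_neg (by omega) (h ▸ hneg n (by omega)), h]
    push_cast
    ring

lemma eq_or_eq_of_neg_of_pos (hx : IsNormalizedGDOrbit F' δ x) {p : ℝ} (h1 : x 1 = p)
    (hp : F' p < 0) (hq : 0 < F' (p + δ)) (n : ℕ) :
    x (n + 1) = p ∨ x (n + 1) = p + δ := by
  induction n with
  | zero => exact Or.inl h1
  | succ n ih =>
    rcases ih with h | h
    · exact Or.inr (by rw [hx.succ_of_neg (by omega) (h ▸ hp), h])
    · exact Or.inl (by rw [hx.succ_of_pos (by omega) (h ▸ hq), h]; ring)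

variable {ε a : ℝ}

lemma lt_abs_of_mul_le (hx : IsNormalizedGDOrbit F' δ x) (hneg : ∀ y ≤ -a, F' y < -ε)
    (hε : 0 ≤ ε) (hδ : 0 ≤ δ) {d : ℝ} (h1 : x 1 = -d) {T : ℕ} (hT : T * δ ≤ d - a) :
    ∀ t ∈ Finset.Icc 1 T, ε < |F' (x t)| := by
  have hfar : ∀ n < T, x 1 + n * δ ≤ -a := fun n hn => by
    have : (n : ℝ) * δ ≤ T * δ := by gcongr
    linarith
  have horbit := hx.eq_add_mul_of_neg fun n hn => (hneg _ (hfar n hn)).trans_le (by linarith)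
  intro t ht
  obtain ⟨n, rfl⟩ : ∃ n, t = n + 1 := ⟨t - 1, by grind⟩
  have hlt := hneg _ (hfar n (by grind))
  rw [horbit n (by grind), abs_of_neg (by linarith)]
  linarith

lemma lt_abs_of_two_mul_le (hx : IsNormalizedGDOrbit F' δ x) (hneg : ∀ y ≤ -a, F' y < -ε)
    (hpos : ∀ y, a ≤ y → ε < F' y) (hε : 0 ≤ ε) (h1 : x 1 = -a) (hδ : 2 * a ≤ δ)
    {t : ℕ} (ht : 1 ≤ t) : ε < |F' (x t)| := by
  have hp := hneg (-a) le_rfl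
  have hq := hpos (-a + δ) (by linarith)
  obtain ⟨n, rfl⟩ : ∃ n, t = n + 1 := ⟨t - 1, by omega⟩
  rcases hx.eq_or_eq_of_neg_of_pos h1 (by linarith) (by linarith) n with h | h
  · rw [h, abs_of_neg (by linarith)]; linarith
  · rw [h, abs_of_pos (by linarith)]; exact hq

end IsNormalizedGDOrbit

section HardOrbit

variable {ε L δ : ℝ} {x : ℕ → ℝ}

lemma lt_abs_hardDeriv_of_start_far (hε : 0 < ε) (hL : 0 < L) {Δ : ℝ} (hΔ : 8 * ε ^ 2 ≤ L * Δ)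
    (hx : IsNormalizedGDOrbit (hardDeriv ε L) δ x) (hδ : 0 ≤ δ) (h1 : x 1 = -(Δ / (2 * ε)))
    {T : ℕ} (hT : T * δ ≤ Δ / ε / 4) : ∀ t ∈ Finset.Icc 1 T, ε < |hardDeriv ε L (x t)| := by
  have hwidth : 2 * ε / L ≤ Δ / ε / 4 := by
    rw [div_div, div_le_div_iff₀ hL (by positivity)]; nlinarith
  refine hx.lt_abs_of_mul_le (fun _ => hardDeriv_lt_neg hε hL) hε.le hδ h1 ?_
  have : Δ / (2 * ε) = 2 * (Δ / ε / 4) := by ring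
  linarith

lemma lt_abs_hardDeriv_of_step_large (hε : 0 < ε) (hL : 0 < L)
    (hx : IsNormalizedGDOrbit (hardDeriv ε L) δ x) (h1 : x 1 = -(2 * ε / L))
    (hδ : 4 / (L / ε) ≤ δ) {t : ℕ} (ht : 1 ≤ t) : ε < |hardDeriv ε L (x t)| := by
  refine hx.lt_abs_of_two_mul_le (fun _ => hardDeriv_lt_neg hε hL)
    (fun _ => lt_hardDeriv hε hL) hε.le h1 ?_ ht
  have : 4 / (L / ε) = 2 * (2 * ε / L) := by rw [div_div_eq_mul_div]; ring
  linarith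

end HardOrbit

lemma rpow_le_mul_of_le_mul_rpow_one_div {p k b X T : ℝ} (hp : 0 < p) (hb : 0 ≤ b)
    (hkb : k ≤ b ^ (1 / p)) (hX : 0 ≤ X) (hT0 : 0 ≤ T) (hT : T ≤ k * X ^ (1 / p)) :
    T ^ p ≤ b * X := by
  have h : T ≤ (b * X) ^ p⁻¹ := by
    rw [← one_div, mul_rpow hb hX]
    exact hT.trans (by gcongr)
  exact (le_rpow_inv_iff_of_pos hT0 (by positivity) hp).mp h

section StepSize

variable {r η k X T : ℝ}

lemma mul_stepSize_le (hr1 : r < 1) (hη : 0 < η) (hk : k ≤ (4 * η)⁻¹ ^ (1 / (1 - r)))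
    (hX : 0 ≤ X) (hT0 : 0 ≤ T) (hT : T ≤ k * X ^ (1 / (1 - r))) :
    T * (η * T ^ (-r)) ≤ X / 4 := by
  have hpow :=
    rpow_le_mul_of_le_mul_rpow_one_div (sub_pos.mpr hr1) (by positivity) hk hX hT0 hT
  calc T * (η * T ^ (-r)) = η * T ^ (1 - r) := by
        rw [sub_eq_add_neg, rpow_add' hT0 (by linarith), rpow_one]; ring
    _ ≤ η * ((4 * η)⁻¹ * X) := by gcongr
    _ = X / 4 := by field_simp

lemma le_stepSize (hr0 : 0 < r) (hη : 0 < η) (hk : k ≤ (η / 4) ^ (1 / r)) (hX : 0 < X)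
    (hT0 : 0 < T) (hT : T ≤ k * X ^ (1 / r)) :
    4 / X ≤ η * T ^ (-r) := by
  have hpow := rpow_le_mul_of_le_mul_rpow_one_div hr0 (by positivity) hk hX.le hT0.le hT
  rw [rpow_neg hT0.le, ← div_eq_mul_inv, le_div_iff₀ (by positivity)]
  calc 4 / X * T ^ r ≤ 4 / X * (η / 4 * X) := by gcongr
    _ = η := by field_simp

end StepSize

end NGDLowerBound

open NGDLowerBound

/-- deterministic lower bound for normalized gradient descent with polynomial
step-size `η·T^{-r}`: there is a constant `c > 0` depending only on `r` and `η` such that for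
all `L, Δ₁ > 0` and all sufficiently small `ε > 0` there is a hard `L`-smooth instance with
initialization gap at most `Δ₁` on which every horizon
`T ≤ c·((Δ₁/ε)^{1/(1−r)} + (L/ε)^{1/r})` produces only iterates with `|F'(x_t)| > ε`. -/
theorem ngd_deterministic_lower_bound (r η : ℝ) (hr0 : 0 < r) (hr1 : r < 1) (hη : 0 < η) :
    ∃ c : ℝ, 0 < c ∧
      ∀ L Δ₁ : ℝ, 0 < L → 0 < Δ₁ →
      ∃ ε₀ : ℝ, 0 < ε₀ ∧
        ∀ ε : ℝ, 0 < ε → ε < ε₀ →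
        ∃ (F : ℝ → ℝ) (F' : ℝ → ℝ) (x₁ : ℝ),
          -- F is differentiable with derivative F' and is L-smooth
          (∀ x, HasDerivAt F (F' x) x) ∧
          (∀ x y, |F' x - F' y| ≤ L * |x - y|) ∧
          -- F is bounded below, with initialization gap at most Δ₁
          BddBelow (Set.range F) ∧
          F x₁ - sInf (Set.range F) ≤ Δ₁ ∧
          ∀ T : ℕ, (T : ℝ) ≤ c * ((Δ₁ / ε) ^ ((1 : ℝ) / (1 - r)) + (L / ε) ^ ((1 : ℝ) / r)) →
          ∀ x : ℕ → ℝ, x 1 = x₁ →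
          -- normalized (sign) gradient descent with step-size η·T^{-r}
          (∀ t : ℕ, 1 ≤ t →
            x (t + 1) = x t - η * (T : ℝ) ^ (-r) * (F' (x t) / |F' (x t)|)) →
          ∀ t ∈ Finset.Icc 1 T, ε < |F' (x t)| := by
  obtain ⟨k, hk, hk₁, hk₂⟩ : ∃ k : ℝ, 0 < k ∧ k ≤ (4 * η)⁻¹ ^ (1 / (1 - r)) ∧
      k ≤ (η / 4) ^ (1 / r) :=
    ⟨_, by positivity, min_le_left _ _, min_le_right _ _⟩
  refine ⟨k / 2, by positivity, fun L Δ₁ hL hΔ => ⟨√(L * Δ₁ / 8), by positivity, ?_⟩⟩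
  intro ε hε hεsmall
  have hεsq : 8 * ε ^ 2 < L * Δ₁ := by nlinarith [(lt_sqrt hε.le).mp hεsmall]
  have hbdd := (isLeast_range_hardFunction hε hL).bddBelow
  by_cases hAB : (L / ε) ^ (1 / r) ≤ (Δ₁ / ε) ^ (1 / (1 - r))
  · refine ⟨hardFunction ε L, hardDeriv ε L, -(Δ₁ / (2 * ε)), hasDerivAt_hardFunction hε hL,
      abs_hardDeriv_sub_le hε hL, hbdd, ?_, fun T hT x hx1 hx => ?_⟩
    · calc _ ≤ 2 * ε * (Δ₁ / (2 * ε)) := hardFunction_neg_sub_sInf_le hε hL (by positivity)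
        _ = Δ₁ := by field_simp
    have hTδ := mul_stepSize_le (X := Δ₁ / ε) hr1 hη hk₁ (by positivity)
      T.cast_nonneg (by linarith [mul_le_mul_of_nonneg_left hAB hk.le])
    exact lt_abs_hardDeriv_of_start_far hε hL hεsq.le hx (by positivity) hx1 hTδ
  · refine ⟨hardFunction ε L, hardDeriv ε L, -(2 * ε / L), hasDerivAt_hardFunction hε hL,
      abs_hardDeriv_sub_le hε hL, hbdd, ?_, fun T hT x hx1 hx t ht => ?_⟩
    · calc _ ≤ 2 * ε * (2 * ε / L) := hardFunction_neg_sub_sInf_le hε hL (by positivity)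
        _ ≤ Δ₁ := by rw [← mul_div_assoc, div_le_iff₀ hL]; nlinarith
    obtain ⟨ht1, htT⟩ := Finset.mem_Icc.mp ht
    have hδ := le_stepSize (X := L / ε) (T := T) hr0 hη hk₂ (by positivity)
      (Nat.cast_pos.mpr (by omega))
      (by linarith [mul_le_mul_of_nonneg_left (not_le.mp hAB).le hk.le])
    exact lt_abs_hardDeriv_of_step_large hε hL hx hx1 hδ ht1
end

section
/- Adversarial heavy-tailed oracle forces large batch sizes: let p ∈ (1,2], σ > 0, and μ ∈ (0, σ/4]. There exists a real-valued random variable X with E[X] = μ and E[|X − μ|^p] ≤ σ^p such that for every batch size B ∈ ℕ with B ≤ (1/2)·(σ/(4μ))^{p/(p−1)}, if X₁, …, X_B are i.i.d. copies of X, then P( (1/B)·∑_{i=1}^B X_i = −μ ) ≥ 1/2; in particular, the sample mean of the batch has the opposite sign of the true mean with probability at least 1/2. -/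
/-!
The adversary puts mass `1 - q` at `-m` and mass `q` at the far point `m (2 - q) / q`, which
restores the mean `m`. The rare atom contributes about `q (2m / q)^p = (2m)^p q^(1-p)` to the
`p`-th central moment, so `q = (4m/σ)^(p/(p-1))` is, up to constants, the smallest weight
compatible with the moment budget `σ^p`. A batch of size `B` misses the rare atom altogether with
probability `(1 - q)^B ≥ 1 - B q`, which is at least `1/2` as long as `B ≤ 1 / (2q)`; on that
event every sample, hence the sample mean, equals `-m`.
-/

open MeasureTheory ProbabilityTheory Real

noncomputable def twoPointMeasure (q x y : ℝ) : Measure ℝ :=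
  ENNReal.ofReal (1 - q) • Measure.dirac x + ENNReal.ofReal q • Measure.dirac y

section TwoPointMeasure

variable {q x y : ℝ}

lemma isProbabilityMeasure_twoPointMeasure (hq0 : 0 ≤ q) (hq1 : q ≤ 1) :
    IsProbabilityMeasure (twoPointMeasure q x y) := by
  constructor
  simp only [twoPointMeasure, Measure.add_apply, Measure.smul_apply, smul_eq_mul,
    measure_univ, mul_one]
  rw [← ENNReal.ofReal_add (by linarith) hq0]
  simp

lemma integral_twoPointMeasure (hq0 : 0 ≤ q) (hq1 : q ≤ 1) (g : ℝ → ℝ) :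
    ∫ t, g t ∂twoPointMeasure q x y = (1 - q) * g x + q * g y := by
  rw [twoPointMeasure,
    integral_add_measure ((integrable_dirac enorm_lt_top).smul_measure ENNReal.ofReal_ne_top)
      ((integrable_dirac enorm_lt_top).smul_measure ENNReal.ofReal_ne_top),
    integral_smul_measure, integral_smul_measure, integral_dirac, integral_dirac,
    ENNReal.toReal_ofReal (by linarith), ENNReal.toReal_ofReal hq0, smul_eq_mul, smul_eq_mul]

lemma twoPointMeasure_singleton_left (hyx : y ≠ x) :
    twoPointMeasure q x y {x} = ENNReal.ofReal (1 - q) := by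
  simp [twoPointMeasure, hyx]

end TwoPointMeasure

noncomputable def adversarialLaw (q m : ℝ) : Measure ℝ :=
  twoPointMeasure q (-m) (m * (2 - q) / q)

section AdversarialLaw

variable {q m : ℝ}

lemma integral_id_adversarialLaw (hq0 : 0 < q) (hq1 : q ≤ 1) :
    ∫ t, t ∂adversarialLaw q m = m := by
  rw [adversarialLaw, integral_twoPointMeasure hq0.le hq1 (fun t => t)]
  field_simp
  ring

lemma integral_abs_sub_rpow_adversarialLaw_le (hq0 : 0 < q) (hq1 : q ≤ 1) (hm : 0 ≤ m)
    {p : ℝ} (hp : 0 ≤ p) :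
    ∫ t, |t - m| ^ p ∂adversarialLaw q m ≤ (2 * m) ^ p + (2 * m) ^ p * q ^ (1 - p) := by
  have hfar : |m * (2 - q) / q - m| ≤ 2 * m / q := by
    rw [show m * (2 - q) / q - m = 2 * m * (1 - q) / q by field_simp; ring,
      abs_of_nonneg (by have := mul_nonneg hm (sub_nonneg.2 hq1); positivity)]
    exact div_le_div_of_nonneg_right (by nlinarith) hq0.le
  have hnear : |-m - m| = 2 * m := by
    rw [← neg_add', abs_neg, ← two_mul, abs_of_nonneg (by linarith)]
  rw [adversarialLaw, integral_twoPointMeasure hq0.le hq1, hnear]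
  calc (1 - q) * (2 * m) ^ p + q * |m * (2 - q) / q - m| ^ p
      ≤ 1 * (2 * m) ^ p + q * (2 * m / q) ^ p := by gcongr; linarith
    _ = (2 * m) ^ p + (2 * m) ^ p * q ^ (1 - p) := by
        rw [div_rpow (by linarith) hq0.le, rpow_sub hq0, rpow_one]
        ring

lemma adversarialLaw_singleton_neg (hq0 : 0 < q) (hq1 : q ≤ 1) (hm : 0 < m) :
    adversarialLaw q m {-m} = ENNReal.ofReal (1 - q) :=
  twoPointMeasure_singleton_left <| ne_of_gt <| by
    have : 0 < 2 - q := by linarith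
    have : 0 < m * (2 - q) / q := by positivity
    linarith

end AdversarialLaw

lemma rpow_div_sub_one_rpow_one_sub {r p : ℝ} (hr : 0 < r) (hp : 1 < p) :
    (r ^ (p / (p - 1))) ^ (1 - p) = r⁻¹ ^ p := by
  have hp0 : p - 1 ≠ 0 := by linarith
  rw [← rpow_mul hr.le, show p / (p - 1) * (1 - p) = -p by field_simp; ring, rpow_neg hr.le,
    inv_rpow hr.le]

lemma one_half_le_one_sub_pow {q : ℝ} {n : ℕ} (hq : q ≤ 2) (hqn : n * q ≤ 1 / 2) :
    1 / 2 ≤ (1 - q) ^ n := by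
  have := one_add_mul_le_pow (a := -q) (by linarith) n
  rw [← sub_eq_add_neg] at this
  linarith

section SampleMean

variable {Ω : Type*} [MeasurableSpace Ω] {P : Measure Ω}

lemma ProbabilityTheory.iIndepFun.measure_forall_eq {ι β : Type*} [Fintype ι]
    [MeasurableSpace β] [MeasurableSingletonClass β] {Y : ι → Ω → β} (hY : iIndepFun Y P) (x : β) :
    P {ω | ∀ i, Y i ω = x} = ∏ i, P (Y i ⁻¹' {x}) := by
  have h := hY.measure_inter_preimage_eq_mul Finset.univ (sets := fun _ => {x})
    (fun _ _ => measurableSet_singleton x)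
  convert h using 2
  ext ω
  simp

lemma pow_le_measure_sampleMean_eq {B : ℕ} (hB : B ≠ 0) {Y : Fin B → Ω → ℝ}
    (hYm : ∀ i, Measurable (Y i)) (hY : iIndepFun Y P) {ν : Measure ℝ}
    (hYν : ∀ i, P.map (Y i) = ν) (x : ℝ) :
    ν {x} ^ B ≤ P {ω | (1 / (B : ℝ)) * ∑ i, Y i ω = x} := by
  have hall : ν {x} ^ B = P {ω | ∀ i, Y i ω = x} := by
    simp_rw [hY.measure_forall_eq, ← Measure.map_apply (hYm _) (measurableSet_singleton x), hYν,
      Finset.prod_const, Finset.card_univ, Fintype.card_fin]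
  rw [hall]
  refine measure_mono fun ω (hω : ∀ i, Y i ω = x) => ?_
  simp [hω, hB]

end SampleMean

theorem adversarial_oracle_forces_large_batches_general
    (p σ m : ℝ) (hp1 : 1 < p) (hσ : 0 < σ) (hm : 0 < m) (hmσ : m ≤ σ / 4) :
    ∃ (μ : Measure ℝ) (X : ℝ → ℝ), IsProbabilityMeasure μ ∧ Measurable X ∧
      -- X has mean m and p-th central moment at most σ^p
      (∫ ω, X ω ∂μ) = m ∧
      (∫ ω, |X ω - m| ^ p ∂μ) ≤ σ ^ p ∧
      -- for every admissible batch size, the batch mean of i.i.d. copies of X equals −m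
      -- with probability at least 1/2
      (∀ B : ℕ, 1 ≤ B → (B : ℝ) ≤ (1 / 2) * (σ / (4 * m)) ^ (p / (p - 1)) →
        ∀ (Ω' : Type*) [MeasurableSpace Ω'] (μ' : Measure Ω') [IsProbabilityMeasure μ']
          (Y : Fin B → Ω' → ℝ),
          (∀ i, Measurable (Y i)) →
          iIndepFun Y μ' →
          (∀ i, Measure.map (Y i) μ' = Measure.map X μ) →
          ENNReal.ofReal (1 / 2) ≤ μ' {ω | (1 / (B : ℝ)) * ∑ i, Y i ω = -m}) := by
  set r := 4 * m / σ with hr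
  have hr0 : 0 < r := by positivity
  have hr1 : r ≤ 1 := by rw [div_le_one hσ]; linarith
  set q := r ^ (p / (p - 1))
  have hq0 : 0 < q := by positivity
  have hq1 : q ≤ 1 := rpow_le_one hr0.le hr1 (div_nonneg (by linarith) (by linarith))
  refine ⟨adversarialLaw q m, id, isProbabilityMeasure_twoPointMeasure hq0.le hq1, measurable_id,
    integral_id_adversarialLaw hq0 hq1, ?_, ?_⟩
  · have hscale : (2 * m) ^ p * q ^ (1 - p) = (σ / 2) ^ p := by
      rw [rpow_div_sub_one_rpow_one_sub hr0 hp1, ← mul_rpow (by positivity) (by positivity), hr]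
      congr 1
      field_simp
      ring
    calc ∫ t, |id t - m| ^ p ∂adversarialLaw q m
        ≤ (2 * m) ^ p + (2 * m) ^ p * q ^ (1 - p) :=
          integral_abs_sub_rpow_adversarialLaw_le hq0 hq1 hm.le (by linarith)
      _ ≤ (σ / 2) ^ p + (σ / 2) ^ p := by rw [hscale]; gcongr; linarith
      _ ≤ σ ^ p := by simpa using add_rpow_le_rpow_add (half_pos hσ).le (half_pos hσ).le hp1.le
  · intro B hB1 hB Ω' _ μ' _ Y hYm hY hYmap
    have hBq : B * q ≤ 1 / 2 := by
      rwa [show σ / (4 * m) = r⁻¹ by rw [hr, inv_div], inv_rpow hr0.le,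
        le_mul_inv_iff₀ hq0] at hB
    calc ENNReal.ofReal (1 / 2)
        ≤ ENNReal.ofReal ((1 - q) ^ B) :=
          ENNReal.ofReal_le_ofReal (one_half_le_one_sub_pow (by linarith) hBq)
      _ = adversarialLaw q m {-m} ^ B := by
          rw [adversarialLaw_singleton_neg hq0 hq1 hm, ENNReal.ofReal_pow (by linarith)]
      _ ≤ _ := pow_le_measure_sampleMean_eq (by omega) hYm hY
          (fun i => (hYmap i).trans Measure.map_id) (-m)

/-- adversarial heavy-tailed oracle forcing large batch sizes: for
`p ∈ (1,2]`, `σ > 0` and mean `m ∈ (0, σ/4]` there is a real random variable `X` with mean `m`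
and `p`-th central moment at most `σ^p` such that for every batch size
`B ≤ (1/2)·(σ/(4m))^{p/(p−1)}`, the sample mean of `B` i.i.d. copies of `X` equals `−m`
(in particular has the opposite sign of the true mean) with probability at least `1/2`. -/
theorem adversarial_oracle_forces_large_batches
    (p σ m : ℝ) (hp1 : 1 < p) (hp2 : p ≤ 2) (hσ : 0 < σ) (hm : 0 < m) (hmσ : m ≤ σ / 4) :
    ∃ (μ : Measure ℝ) (X : ℝ → ℝ), IsProbabilityMeasure μ ∧ Measurable X ∧
      -- X has mean m and p-th central moment at most σ^p
      (∫ ω, X ω ∂μ) = m ∧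
      (∫ ω, |X ω - m| ^ p ∂μ) ≤ σ ^ p ∧
      -- for every admissible batch size, the batch mean of i.i.d. copies of X equals −m
      -- with probability at least 1/2
      (∀ B : ℕ, 1 ≤ B → (B : ℝ) ≤ (1 / 2) * (σ / (4 * m)) ^ (p / (p - 1)) →
        ∀ (Ω' : Type*) [MeasurableSpace Ω'] (μ' : Measure Ω') [IsProbabilityMeasure μ']
          (Y : Fin B → Ω' → ℝ),
          (∀ i, Measurable (Y i)) →
          iIndepFun Y μ' →
          (∀ i, Measure.map (Y i) μ' = Measure.map X μ) →
          ENNReal.ofReal (1 / 2) ≤ μ' {ω | (1 / (B : ℝ)) * ∑ i, Y i ω = -m}) :=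
  adversarial_oracle_forces_large_batches_general p σ m hp1 hσ hm hmσ
end

section
/- Vectorized von Bahr–Esseen inequality with weights: let p ∈ [1,2], let X₁, …, X_n be independent random vectors in ℝ^d with E[X_i] = 0 and E[‖X_i‖^p] < ∞ for each i (norms Euclidean), and let a₁, …, a_n be real numbers. Then E[ ‖∑_{i=1}^n a_i·X_i‖^p ] ≤ 2·∑_{i=1}^n |a_i|^p·E[‖X_i‖^p]. -/
/-!
In a real inner product space, the parallelogram law together with concavity and subadditivity
of `t ↦ t ^ (p / 2)` gives `‖x + y‖ ^ p + ‖x - y‖ ^ p ≤ 2 (‖x‖ ^ p + ‖y‖ ^ p)` for `p ≤ 2`.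
If `Y` is centred and independent of `X`, integrating out `Y` first and applying Jensen's
inequality (`p ≥ 1`) gives `E‖X‖ ^ p ≤ E‖X - Y‖ ^ p`. Subtracting this from the integrated
pointwise inequality yields `E‖X + Y‖ ^ p ≤ E‖X‖ ^ p + 2 E‖Y‖ ^ p`, and induction over the
summands `aᵢ • Xᵢ` gives the bound.
-/

open MeasureTheory ProbabilityTheory Real

theorem norm_add_rpow_add_norm_sub_rpow_le {E : Type*} [NormedAddCommGroup E]
    [InnerProductSpace ℝ E] {p : ℝ} (hp0 : 0 ≤ p) (hp2 : p ≤ 2) (x y : E) :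
    ‖x + y‖ ^ p + ‖x - y‖ ^ p ≤ 2 * (‖x‖ ^ p + ‖y‖ ^ p) := by
  obtain ⟨q, hq0, hq1, rfl⟩ : ∃ q : ℝ, 0 ≤ q ∧ q ≤ 1 ∧ p = 2 * q :=
    ⟨p / 2, by positivity, by linarith, by ring⟩
  have hsq : ∀ v : E, ‖v‖ ^ (2 * q) = (‖v‖ ^ 2) ^ q := fun v => by
    rw [rpow_mul (norm_nonneg v), rpow_two]
  have hpar : (1 / 2 : ℝ) • ‖x + y‖ ^ 2 + (1 / 2 : ℝ) • ‖x - y‖ ^ 2 = ‖x‖ ^ 2 + ‖y‖ ^ 2 := by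
    have := parallelogram_law_with_norm ℝ x y
    simp only [smul_eq_mul]
    linarith
  calc ‖x + y‖ ^ (2 * q) + ‖x - y‖ ^ (2 * q)
      = 2 * ((1 / 2 : ℝ) • (‖x + y‖ ^ 2) ^ q + (1 / 2 : ℝ) • (‖x - y‖ ^ 2) ^ q) := by
        rw [hsq, hsq, smul_eq_mul, smul_eq_mul]; ring
    _ ≤ 2 * ((1 / 2 : ℝ) • ‖x + y‖ ^ 2 + (1 / 2 : ℝ) • ‖x - y‖ ^ 2) ^ q := by
        gcongr
        exact (Real.concaveOn_rpow hq0 hq1).2 (sq_nonneg (‖x + y‖)) (sq_nonneg (‖x - y‖))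
          (by norm_num) (by norm_num) (by norm_num)
    _ ≤ 2 * ((‖x‖ ^ 2) ^ q + (‖y‖ ^ 2) ^ q) := by
        rw [hpar]
        gcongr
        exact Real.rpow_add_le_add_rpow (sq_nonneg _) (sq_nonneg _) hq0 hq1
    _ = 2 * (‖x‖ ^ (2 * q) + ‖y‖ ^ (2 * q)) := by rw [hsq, hsq]

theorem memLp_ofReal_iff_integrable_norm_rpow {α E : Type*} [MeasurableSpace α] {μ : Measure α}
    [NormedAddCommGroup E] {f : α → E} {p : ℝ} (hp : 0 < p) (hf : AEStronglyMeasurable f μ) :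
    MemLp f (ENNReal.ofReal p) μ ↔ Integrable (fun x => ‖f x‖ ^ p) μ := by
  rw [← integrable_norm_rpow_iff hf (by simpa using hp) ENNReal.ofReal_ne_top,
    ENNReal.toReal_ofReal hp.le]

section Jensen

variable {Ω E : Type*} [MeasurableSpace Ω] {μ : Measure Ω} [IsProbabilityMeasure μ]
  [NormedAddCommGroup E] [NormedSpace ℝ E] [CompleteSpace E]

theorem norm_rpow_le_integral_norm_sub_rpow {p : ℝ} (hp1 : 1 ≤ p) {Y : Ω → E}
    (hY : MemLp Y (ENNReal.ofReal p) μ) (hmean : ∫ ω, Y ω ∂μ = 0) (v : E) :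
    ‖v‖ ^ p ≤ ∫ ω, ‖v - Y ω‖ ^ p ∂μ := by
  have hp0 : 0 < p := by linarith
  have hY_int : Integrable Y μ := hY.integrable (by simpa using hp1)
  have hsub : MemLp (fun ω => v - Y ω) (ENNReal.ofReal p) μ := (memLp_const v).sub hY
  have hjensen : (∫ ω, ‖v - Y ω‖ ∂μ) ^ p ≤ ∫ ω, ‖v - Y ω‖ ^ p ∂μ :=
    (convexOn_rpow hp1).map_integral_le (continuousOn_id.rpow_const fun _ _ => Or.inr hp0.le)
      isClosed_Ici (ae_of_all _ fun _ => norm_nonneg _)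
      ((integrable_const v).sub hY_int).norm
      ((memLp_ofReal_iff_integrable_norm_rpow hp0 hsub.1).1 hsub)
  calc ‖v‖ ^ p = ‖∫ ω, (v - Y ω) ∂μ‖ ^ p := by
        rw [integral_sub (integrable_const v) hY_int, hmean, integral_const]; simp
    _ ≤ (∫ ω, ‖v - Y ω‖ ∂μ) ^ p := by gcongr; exact norm_integral_le_integral_norm _
    _ ≤ ∫ ω, ‖v - Y ω‖ ^ p ∂μ := hjensen

end Jensen

section Independent

variable {Ω E : Type*} [MeasurableSpace Ω] {μ : Measure Ω} [IsProbabilityMeasure μ]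
  [NormedAddCommGroup E] [NormedSpace ℝ E] [CompleteSpace E]
  [MeasurableSpace E] [BorelSpace E] [SecondCountableTopology E] {p : ℝ}

theorem ProbabilityTheory.IndepFun.integral_norm_rpow_le_integral_norm_sub_rpow (hp1 : 1 ≤ p)
    {X Y : Ω → E} (hXY : IndepFun X Y μ) (hX : MemLp X (ENNReal.ofReal p) μ)
    (hY : MemLp Y (ENNReal.ofReal p) μ) (hmean : ∫ ω, Y ω ∂μ = 0) :
    ∫ ω, ‖X ω‖ ^ p ∂μ ≤ ∫ ω, ‖X ω - Y ω‖ ^ p ∂μ := by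
  have hp0 : 0 < p := by linarith
  have hXm := hX.1.aemeasurable
  have hYm := hY.1.aemeasurable
  have hpair : AEMeasurable (fun ω => (X ω, Y ω)) μ := hXm.prodMk hYm
  have hprod : μ.map (fun ω => (X ω, Y ω)) = (μ.map X).prod (μ.map Y) :=
    (indepFun_iff_map_prod_eq_prod_map_map hXm hYm).mp hXY
  have hg : Measurable fun z : E × E => ‖z.1 - z.2‖ ^ p := by fun_prop
  have hrpow : Measurable fun x : E => ‖x‖ ^ p := by fun_prop
  have hg_int : Integrable (fun z : E × E => ‖z.1 - z.2‖ ^ p) ((μ.map X).prod (μ.map Y)) := by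
    rw [← hprod]
    exact (integrable_map_measure hg.aestronglyMeasurable hpair).2
      ((memLp_ofReal_iff_integrable_norm_rpow hp0 (hX.1.sub hY.1)).1 (hX.sub hY))
  have hX_law : Integrable (fun x : E => ‖x‖ ^ p) (μ.map X) :=
    (integrable_map_measure hrpow.aestronglyMeasurable hXm).2
      ((memLp_ofReal_iff_integrable_norm_rpow hp0 hX.1).1 hX)
  have hY_law : MemLp id (ENNReal.ofReal p) (μ.map Y) :=
    (memLp_map_measure_iff aestronglyMeasurable_id hYm).2 hY
  have hY_law_mean : ∫ y, y ∂(μ.map Y) = 0 :=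
    (integral_map (f := id) hYm aestronglyMeasurable_id).trans hmean
  have := Measure.isProbabilityMeasure_map (μ := μ) hYm
  calc ∫ ω, ‖X ω‖ ^ p ∂μ = ∫ x, ‖x‖ ^ p ∂(μ.map X) :=
        (integral_map hXm hrpow.aestronglyMeasurable).symm
    _ ≤ ∫ x, ∫ y, ‖x - y‖ ^ p ∂(μ.map Y) ∂(μ.map X) :=
        integral_mono hX_law hg_int.integral_prod_left fun x =>
          norm_rpow_le_integral_norm_sub_rpow hp1 hY_law hY_law_mean x
    _ = ∫ ω, ‖X ω - Y ω‖ ^ p ∂μ := by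
        rw [← integral_prod _ hg_int, ← hprod, integral_map hpair hg.aestronglyMeasurable]

end Independent

section InnerProduct

variable {Ω E : Type*} [MeasurableSpace Ω] {μ : Measure Ω} [IsProbabilityMeasure μ]
  [NormedAddCommGroup E] [InnerProductSpace ℝ E] [CompleteSpace E]
  [MeasurableSpace E] [BorelSpace E] [SecondCountableTopology E] {p : ℝ}

theorem ProbabilityTheory.IndepFun.integral_norm_add_rpow_le (hp1 : 1 ≤ p) (hp2 : p ≤ 2)
    {X Y : Ω → E} (hXY : IndepFun X Y μ) (hX : MemLp X (ENNReal.ofReal p) μ)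
    (hY : MemLp Y (ENNReal.ofReal p) μ) (hmean : ∫ ω, Y ω ∂μ = 0) :
    ∫ ω, ‖X ω + Y ω‖ ^ p ∂μ ≤ ∫ ω, ‖X ω‖ ^ p ∂μ + 2 * ∫ ω, ‖Y ω‖ ^ p ∂μ := by
  have hp0 : 0 < p := by linarith
  have hint {Z : Ω → E} (hZ : MemLp Z (ENNReal.ofReal p) μ) :
      Integrable (fun ω => ‖Z ω‖ ^ p) μ :=
    (memLp_ofReal_iff_integrable_norm_rpow hp0 hZ.1).1 hZ
  have hadd : Integrable (fun ω => ‖X ω + Y ω‖ ^ p) μ := hint (hX.add hY)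
  have hsub : Integrable (fun ω => ‖X ω - Y ω‖ ^ p) μ := hint (hX.sub hY)
  have hpar : ∫ ω, ‖X ω + Y ω‖ ^ p ∂μ + ∫ ω, ‖X ω - Y ω‖ ^ p ∂μ
      ≤ 2 * (∫ ω, ‖X ω‖ ^ p ∂μ + ∫ ω, ‖Y ω‖ ^ p ∂μ) := by
    rw [← integral_add hadd hsub, ← integral_add (hint hX) (hint hY), ← integral_const_mul]
    exact integral_mono (hadd.add hsub)
      (((hint hX).add (hint hY)).const_mul 2)
      fun ω => norm_add_rpow_add_norm_sub_rpow_le hp0.le hp2 (X ω) (Y ω)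
  linarith [hXY.integral_norm_rpow_le_integral_norm_sub_rpow hp1 hX hY hmean]

theorem ProbabilityTheory.iIndepFun.integral_norm_sum_rpow_le (hp1 : 1 ≤ p) (hp2 : p ≤ 2)
    {ι : Type*} {Y : ι → Ω → E} (hindep : iIndepFun Y μ)
    (hY : ∀ i, MemLp (Y i) (ENNReal.ofReal p) μ) (hmean : ∀ i, ∫ ω, Y i ω ∂μ = 0)
    (s : Finset ι) :
    ∫ ω, ‖∑ i ∈ s, Y i ω‖ ^ p ∂μ ≤ 2 * ∑ i ∈ s, ∫ ω, ‖Y i ω‖ ^ p ∂μ := by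
  classical
  induction s using Finset.induction_on with
  | empty => simp [Real.zero_rpow (by linarith : p ≠ 0)]
  | insert j s hj ih =>
    have hindep_j : IndepFun (fun ω => ∑ i ∈ s, Y i ω) (Y j) μ := by
      simpa only [Finset.sum_fn] using
        hindep.indepFun_finsetSum_of_notMem₀ (fun i => (hY i).1.aemeasurable) hj
    have hsum : MemLp (fun ω => ∑ i ∈ s, Y i ω) (ENNReal.ofReal p) μ :=
      memLp_finsetSum s fun i _ => hY i
    calc ∫ ω, ‖∑ i ∈ insert j s, Y i ω‖ ^ p ∂μ = ∫ ω, ‖∑ i ∈ s, Y i ω + Y j ω‖ ^ p ∂μ := by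
          simp_rw [Finset.sum_insert hj, add_comm]
      _ ≤ ∫ ω, ‖∑ i ∈ s, Y i ω‖ ^ p ∂μ + 2 * ∫ ω, ‖Y j ω‖ ^ p ∂μ :=
          hindep_j.integral_norm_add_rpow_le hp1 hp2 hsum (hY j) (hmean j)
      _ ≤ 2 * ∑ i ∈ s, ∫ ω, ‖Y i ω‖ ^ p ∂μ + 2 * ∫ ω, ‖Y j ω‖ ^ p ∂μ := by gcongr
      _ = 2 * ∑ i ∈ insert j s, ∫ ω, ‖Y i ω‖ ^ p ∂μ := by
          rw [Finset.sum_insert hj]; ring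

end InnerProduct

/-- vectorized von Bahr–Esseen inequality with weights: for independent
mean-zero random vectors `X₁, …, X_n` in `ℝ^d` with finite `p`-th moments, `p ∈ [1,2]`, and real
weights `a₁, …, a_n`, one has `E[‖∑ aᵢ Xᵢ‖^p] ≤ 2 ∑ |aᵢ|^p E[‖Xᵢ‖^p]`. -/
theorem von_bahr_esseen_vector
    {d n : ℕ} {Ω : Type*} [MeasurableSpace Ω] (μ : Measure Ω) [IsProbabilityMeasure μ]
    (p : ℝ) (hp1 : 1 ≤ p) (hp2 : p ≤ 2)
    (X : Fin n → Ω → EuclideanSpace ℝ (Fin d))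
    (hmeas : ∀ i, Measurable (X i))
    (hindep : iIndepFun X μ)
    (hmean : ∀ i, (∫ ω, X i ω ∂μ) = 0)
    (hmom : ∀ i, Integrable (fun ω => ‖X i ω‖ ^ p) μ)
    (a : Fin n → ℝ) :
    (∫ ω, ‖∑ i, a i • X i ω‖ ^ p ∂μ) ≤ 2 * ∑ i, |a i| ^ p * ∫ ω, ‖X i ω‖ ^ p ∂μ := by
  have hLp i : MemLp (X i) (ENNReal.ofReal p) μ :=
    (memLp_ofReal_iff_integrable_norm_rpow (by linarith) (hmeas i).aestronglyMeasurable).2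
      (hmom i)
  have hweighted := (hindep.comp (fun i x => a i • x) fun i => measurable_const_smul (a i))
    |>.integral_norm_sum_rpow_le hp1 hp2 (fun i => (hLp i).const_smul (a i))
      (fun i => by simp [integral_smul, hmean i]) Finset.univ
  simpa [norm_smul, Real.mul_rpow (abs_nonneg _) (norm_nonneg _), integral_const_mul]
    using hweighted
end

section
/- One-step descent lemma for a normalized step: let F : ℝ^d → ℝ be differentiable and L-smooth, let x ∈ ℝ^d, g ∈ ℝ^d with g ≠ 0, η > 0, and set x⁺ = x − η·g/‖g‖. Then F(x⁺) ≤ F(x) − η·‖∇F(x)‖ + 2η·‖g − ∇F(x)‖ + L·η²/2. -/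
/-!
Along the segment from `x` to `x + v`, `L`-smoothness gives the quadratic upper bound
`F (x + v) ≤ F x + ⟪∇F x, v⟫ + L‖v‖²/2`. For the normalized step `v = -η • g/‖g‖` the linear
term is `-η ⟪∇F x, g/‖g‖⟫`, and for every `a`, `⟪a, g/‖g‖⟫ ≥ ‖g‖ - ‖g - a‖ ≥ ‖a‖ - 2‖g - a‖`:
with `a = ∇F x`, the direction `g` is a descent direction up to twice the error `‖g - ∇F x‖`.
-/

open InnerProductSpace

section

variable {E : Type*} [NormedAddCommGroup E] [InnerProductSpace ℝ E]

theorem image_add_le_of_norm_gradient_sub_le [CompleteSpace E] {F : E → ℝ} {gradF : E → E}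
    {L : ℝ} {x : E} (hgrad : ∀ y, HasGradientAt F (gradF y) y)
    (hlip : ∀ y, ‖gradF y - gradF x‖ ≤ L * ‖y - x‖) (v : E) :
    F (x + v) ≤ F x + ⟪gradF x, v⟫_ℝ + L * ‖v‖ ^ 2 / 2 := by
  set ψ : ℝ → ℝ := fun t => F (x + t • v) - t * ⟪gradF x, v⟫_ℝ - L * ‖v‖ ^ 2 * t ^ 2 / 2
  have hψ : ∀ t, HasDerivAt ψ (⟪gradF (x + t • v) - gradF x, v⟫_ℝ - L * ‖v‖ ^ 2 * t) t := by
    intro t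
    have hline : HasDerivAt (fun s : ℝ => x + s • v) v t := by
      simpa using ((hasDerivAt_id t).smul_const v).const_add x
    have hF : HasDerivAt (fun s : ℝ => F (x + s • v)) ⟪gradF (x + t • v), v⟫_ℝ t :=
      (hgrad _).hasFDerivAt.comp_hasDerivAt t hline
    have hquad := ((hasDerivAt_pow 2 t).const_mul (L * ‖v‖ ^ 2)).div_const 2
    refine ((hF.sub ((hasDerivAt_id t).mul_const _)).sub hquad).congr_deriv ?_
    rw [inner_sub_left]
    ring
  have hinner : ∀ t, 0 ≤ t → ⟪gradF (x + t • v) - gradF x, v⟫_ℝ ≤ L * ‖v‖ ^ 2 * t := by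
    intro t ht
    calc ⟪gradF (x + t • v) - gradF x, v⟫_ℝ
        ≤ ‖gradF (x + t • v) - gradF x‖ * ‖v‖ := real_inner_le_norm _ _
      _ ≤ L * ‖(x + t • v) - x‖ * ‖v‖ := by gcongr; exact hlip _
      _ = L * ‖v‖ ^ 2 * t := by
        rw [add_sub_cancel_left, norm_smul, Real.norm_of_nonneg ht]; ring
  have hanti : AntitoneOn ψ (Set.Ici 0) :=
    antitoneOn_of_hasDerivWithinAt_nonpos (convex_Ici 0)
      (fun t _ => (hψ t).continuousAt.continuousWithinAt)
      (fun t _ => (hψ t).hasDerivWithinAt)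
      (fun t ht => sub_nonpos.2 (hinner t (interior_subset ht)))
  have h10 : ψ 1 ≤ ψ 0 := hanti (by norm_num) (by norm_num) zero_le_one
  simp only [ψ, one_smul, zero_smul, add_zero, one_mul, one_pow, zero_mul, sub_zero] at h10
  linarith

theorem norm_sub_two_mul_norm_sub_le_inner_inv_norm_smul (a g : E) :
    ‖a‖ - 2 * ‖g - a‖ ≤ ⟪a, ‖g‖⁻¹ • g⟫_ℝ := by
  rcases eq_or_ne g 0 with rfl | hg
  · simp only [norm_zero, inv_zero, smul_zero, inner_zero_right, zero_sub, norm_neg]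
    linarith [norm_nonneg a]
  have hproj : ‖g‖ - ‖g - a‖ ≤ ⟪a, ‖g‖⁻¹ • g⟫_ℝ := by
    rw [real_inner_smul_right, le_inv_mul_iff₀ (norm_pos_iff.2 hg)]
    calc ‖g‖ * (‖g‖ - ‖g - a‖) = ⟪g, g⟫_ℝ - ‖g - a‖ * ‖g‖ := by
          rw [real_inner_self_eq_norm_mul_norm]; ring
      _ ≤ ⟪g, g⟫_ℝ - ⟪g - a, g⟫_ℝ := by gcongr; exact real_inner_le_norm _ _
      _ = ⟪a, g⟫_ℝ := by rw [inner_sub_left]; ring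
  linarith [norm_sub_norm_le a g, norm_sub_rev a g]

end

theorem normalized_step_descent_general
    {d : ℕ} (F : EuclideanSpace ℝ (Fin d) → ℝ)
    (gradF : EuclideanSpace ℝ (Fin d) → EuclideanSpace ℝ (Fin d))
    (L : ℝ)
    (hgrad : ∀ y, HasGradientAt F (gradF y) y)
    (hsmooth : ∀ y z, ‖gradF y - gradF z‖ ≤ L * ‖y - z‖)
    (x g : EuclideanSpace ℝ (Fin d)) (hg : g ≠ 0) (η : ℝ) (hη : 0 < η)
    (xplus : EuclideanSpace ℝ (Fin d)) (hxplus : xplus = x - η • (‖g‖⁻¹ • g)) :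
    F xplus ≤ F x - η * ‖gradF x‖ + 2 * η * ‖g - gradF x‖ + L * η ^ 2 / 2 := by
  subst hxplus
  have hstep : ‖η • (‖g‖⁻¹ • g)‖ = η := by
    rw [norm_smul, norm_smul, norm_inv, norm_norm, inv_mul_cancel₀ (norm_ne_zero_iff.2 hg),
      Real.norm_of_nonneg hη.le, mul_one]
  have hdescent :=
    image_add_le_of_norm_gradient_sub_le hgrad (fun y => hsmooth y x) (-(η • (‖g‖⁻¹ • g)))
  rw [← sub_eq_add_neg, norm_neg, hstep, inner_neg_right, real_inner_smul_right] at hdescent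
  have halign := mul_le_mul_of_nonneg_left
    (norm_sub_two_mul_norm_sub_le_inner_inv_norm_smul (gradF x) g) hη.le
  linarith

/-- one-step descent lemma for a normalized step: if `F` is `L`-smooth and
`x⁺ = x − η·g/‖g‖` with `g ≠ 0` and `η > 0`, then
`F(x⁺) ≤ F(x) − η‖∇F(x)‖ + 2η‖g − ∇F(x)‖ + Lη²/2`. -/
theorem normalized_step_descent
    {d : ℕ} (F : EuclideanSpace ℝ (Fin d) → ℝ)
    (gradF : EuclideanSpace ℝ (Fin d) → EuclideanSpace ℝ (Fin d))
    (L : ℝ) (hL : 0 ≤ L)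
    (hgrad : ∀ y, HasGradientAt F (gradF y) y)
    (hsmooth : ∀ y z, ‖gradF y - gradF z‖ ≤ L * ‖y - z‖)
    (x g : EuclideanSpace ℝ (Fin d)) (hg : g ≠ 0) (η : ℝ) (hη : 0 < η)
    (xplus : EuclideanSpace ℝ (Fin d)) (hxplus : xplus = x - η • (‖g‖⁻¹ • g)) :
    F xplus ≤ F x - η * ‖gradF x‖ + 2 * η * ‖g - gradF x‖ + L * η ^ 2 / 2 :=
  normalized_step_descent_general F gradF L hgrad hsmooth x g hg η hη xplus hxplus
end
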